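/- Pushforward by inverse stereographic projection is a homeomorphism onto its image: the map T_* sending a probability measure μ on ℂ to its pushforward T_*μ on the sphere S is a homeomorphism from M₁(ℂ) (with the weak topology) onto the subset {σ ∈ M₁(S) : σ({(0,0,1)}) = 0} of probability measures on S giving no mass to the north pole (with the weak topology). -/

import Mathlib

open MeasureTheory Filter
open scoped ENNReal NNReal

noncomputable section

/-- The logarithmic kernel `log (1 / |x - y|)`. -/
def logKernel {E : Type*} [PseudoMetricSpace E] (x y : E) : ℝ := Real.log (1 / dist x y)

/-- The mutual logarithmic energy `I(μ,ν) = ∬ log (1/|x-y|) dμ(x) dν(y)`, as an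
extended real number (defined through positive and negative parts). -/
def mutualEnergy {E : Type*} [MeasurableSpace E] [PseudoMetricSpace E]
    (μ ν : Measure E) : EReal :=
  ((∫⁻ p : E × E, ENNReal.ofReal (logKernel p.1 p.2) ∂(μ.prod ν) : ℝ≥0∞) : EReal)
    - ((∫⁻ p : E × E, ENNReal.ofReal (-logKernel p.1 p.2) ∂(μ.prod ν) : ℝ≥0∞) : EReal)

/-- The logarithmic energy `I(μ) = I(μ,μ)`. -/
def logEnergy {E : Type*} [MeasurableSpace E] [PseudoMetricSpace E] (μ : Measure E) : EReal :=
  mutualEnergy μ μ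

/-- The real value of the mutual energy (meaningful when the mutual energy is finite). -/
def mutualEnergyR {E : Type*} [MeasurableSpace E] [PseudoMetricSpace E]
    (μ ν : Measure E) : ℝ :=
  (mutualEnergy μ ν).toReal

/-- A set has positive capacity if it carries a probability measure with finite
logarithmic energy. -/
def PositiveCapacity {E : Type*} [MeasurableSpace E] [PseudoMetricSpace E] (Δ : Set E) : Prop :=
  ∃ σ : Measure E, IsProbabilityMeasure σ ∧ σ Δᶜ = 0 ∧ logEnergy σ ≠ ⊤ ∧ logEnergy σ ≠ ⊥

/-- Positive part of an extended real number, valued in `ℝ≥0∞`. -/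
def erealPos (x : EReal) : ℝ≥0∞ := if x = ⊤ then ⊤ else ENNReal.ofReal x.toReal

/-- Integral of an `EReal`-valued function, as an `EReal` (via positive and negative parts). -/
def eIntegral {E : Type*} [MeasurableSpace E] (μ : Measure E) (f : E → EReal) : EReal :=
  ((∫⁻ x, erealPos (f x) ∂μ : ℝ≥0∞) : EReal) - ((∫⁻ x, erealPos (-(f x)) ∂μ : ℝ≥0∞) : EReal)

/-- Inverse stereographic projection from `ℂ` onto the sphere of radius `1/2`
centered at `(0,0,1/2)` in `ℝ³`. -/
def stereo (x : ℂ) : EuclideanSpace ℝ (Fin 3) :=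
  (EuclideanSpace.equiv (Fin 3) ℝ).symm
    ![x.re / (1 + ‖x‖ ^ 2), x.im / (1 + ‖x‖ ^ 2),
      ‖x‖ ^ 2 / (1 + ‖x‖ ^ 2)]

/-- The north pole `(0,0,1)` of the sphere `S`. -/
def northPole : EuclideanSpace ℝ (Fin 3) := (EuclideanSpace.equiv (Fin 3) ℝ).symm ![0, 0, 1]

end

noncomputable section

open MeasureTheory Filter
open scoped ENNReal NNReal

/-- The sphere `S = {(x₁,x₂,x₃) : x₁² + x₂² + (x₃ - 1/2)² = 1/4}` in `ℝ³`. -/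
def sphereS : Set (EuclideanSpace ℝ (Fin 3)) :=
  {p | p 0 ^ 2 + p 1 ^ 2 + (p 2 - 1 / 2) ^ 2 = 1 / 4}

/-!
`stereo` is a topological embedding of `ℂ` whose range `S \ {northPole}` is Borel. For any
embedding `f` with measurable range into a separable metrizable space, `μ ↦ f_* μ` is a
homeomorphism onto the probability measures concentrated on `range f`: the inverse is
`ν ↦ f^* ν`, which is continuous by the portmanteau theorem because every open set of the domain
is `f ⁻¹' W` for an open `W`, and `(f^* ν) (f ⁻¹' W) = ν W`.
-/

open Set Topology TopologicalSpace

theorem Topology.IsEmbedding.of_leftInverse_continuousOn_range {X Y : Type*}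
    [TopologicalSpace X] [TopologicalSpace Y] {f : X → Y} {g : Y → X}
    (hf : Continuous f) (hg : ContinuousOn g (range f)) (hgf : Function.LeftInverse g f) :
    IsEmbedding f :=
  IsEmbedding.subtypeVal.comp <|
    Function.LeftInverse.isEmbedding (f := (range f).domRestrict g) (g := rangeFactorization f)
      (fun x ↦ hgf x) hg.domRestrict hf.rangeFactorization

namespace MeasurableEmbedding

variable {X Y : Type*} [MeasurableSpace X] [MeasurableSpace Y] {f : X → Y}

theorem comap_apply_preimage_of_null_compl_range (hf : MeasurableEmbedding f) {ν : Measure Y}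
    (hν : ν (range f)ᶜ = 0) (s : Set Y) : ν.comap f (f ⁻¹' s) = ν s := by
  rw [hf.comap_apply, image_preimage_eq_inter_range, measure_inter_conull hν]

def comapProbabilityMeasure (hf : MeasurableEmbedding f)
    (ν : {ν : ProbabilityMeasure Y // (ν : Measure Y) (range f)ᶜ = 0}) : ProbabilityMeasure X :=
  ⟨(ν : Measure Y).comap f, hf.isProbabilityMeasure_comap (ae_iff.mpr ν.2)⟩

theorem comapProbabilityMeasure_apply_preimage (hf : MeasurableEmbedding f)
    (ν : {ν : ProbabilityMeasure Y // (ν : Measure Y) (range f)ᶜ = 0}) (s : Set Y) :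
    (hf.comapProbabilityMeasure ν : Measure X) (f ⁻¹' s) = (ν.1 : Measure Y) s :=
  hf.comap_apply_preimage_of_null_compl_range ν.2 s

end MeasurableEmbedding

namespace Topology.IsEmbedding

variable {X Y : Type*} [TopologicalSpace X] [MeasurableSpace X] [OpensMeasurableSpace X]
  [TopologicalSpace Y] [MeasurableSpace Y] [BorelSpace Y]
  [PseudoMetrizableSpace Y] [SeparableSpace Y] {f : X → Y}

theorem continuous_comapProbabilityMeasure (hf : IsEmbedding f) (hf' : MeasurableEmbedding f) :
    Continuous hf'.comapProbabilityMeasure := by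
  have : FirstCountableTopology {ν : ProbabilityMeasure Y // (ν : Measure Y) (range f)ᶜ = 0} :=
    IsInducing.subtypeVal.firstCountableTopology
  refine continuous_iff_continuousAt.mpr fun ν ↦ ?_
  refine tendsto_of_forall_isOpen_le_liminf' fun G hG ↦ ?_
  obtain ⟨W, hW, rfl⟩ := hf.isInducing.isOpen_iff.mp hG
  simp only [hf'.comapProbabilityMeasure_apply_preimage]
  exact (ProbabilityMeasure.le_liminf_measure_open_of_tendsto
    (continuous_subtype_val.tendsto ν) hW :)

def probabilityMeasureMapHomeomorph (hf : IsEmbedding f) (hf' : MeasurableEmbedding f) :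
    ProbabilityMeasure X ≃ₜ {ν : ProbabilityMeasure Y // (ν : Measure Y) (range f)ᶜ = 0} where
  toFun μ := ⟨μ.map hf.continuous.aemeasurable,
    ae_iff.mp (ae_map_mem_range f hf'.measurableSet_range μ)⟩
  invFun := hf'.comapProbabilityMeasure
  left_inv μ := ProbabilityMeasure.toMeasure_injective <| hf'.comap_map _
  right_inv ν := Subtype.ext <| ProbabilityMeasure.toMeasure_injective <| by
    change ((ν : Measure Y).comap f).map f = ν
    rw [hf'.map_comap, Measure.restrict_eq_self_of_ae_mem (ae_iff.mpr ν.2)]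
  continuous_toFun := (ProbabilityMeasure.continuous_map hf.continuous).subtype_mk _
  continuous_invFun := hf.continuous_comapProbabilityMeasure hf'

end Topology.IsEmbedding

def invStereo (p : EuclideanSpace ℝ (Fin 3)) : ℂ := ⟨p 0 / (1 - p 2), p 1 / (1 - p 2)⟩

lemma invStereo_re (p : EuclideanSpace ℝ (Fin 3)) : (invStereo p).re = p 0 / (1 - p 2) :=
  rfl
lemma invStereo_im (p : EuclideanSpace ℝ (Fin 3)) : (invStereo p).im = p 1 / (1 - p 2) :=
  rfl

lemma stereo_apply_zero (x : ℂ) : stereo x 0 = x.re / (1 + ‖x‖ ^ 2) := rfl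
lemma stereo_apply_one (x : ℂ) : stereo x 1 = x.im / (1 + ‖x‖ ^ 2) := rfl
lemma stereo_apply_two (x : ℂ) : stereo x 2 = ‖x‖ ^ 2 / (1 + ‖x‖ ^ 2) := rfl

lemma one_sub_stereo_apply_two (x : ℂ) : 1 - stereo x 2 = (1 + ‖x‖ ^ 2)⁻¹ := by
  rw [stereo_apply_two]
  field_simp
  ring

lemma continuous_stereo : Continuous stereo :=
  (EuclideanSpace.equiv (Fin 3) ℝ).symm.continuous.comp <| by
    fun_prop (disch := intro; positivity)

lemma stereo_mem_sphereS (x : ℂ) : stereo x ∈ sphereS := by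
  change stereo x 0 ^ 2 + stereo x 1 ^ 2 + (stereo x 2 - 1 / 2) ^ 2 = 1 / 4
  simp only [stereo_apply_zero, stereo_apply_one, stereo_apply_two, Complex.sq_norm,
    Complex.normSq_apply]
  field_simp
  ring

lemma stereo_apply_two_ne_one (x : ℂ) : stereo x 2 ≠ 1 := by
  rw [stereo_apply_two, Ne, div_eq_one_iff_eq (by positivity)]
  exact (lt_one_add _).ne

lemma leftInverse_invStereo_stereo : Function.LeftInverse invStereo stereo := fun x ↦ by
  apply Complex.ext
  · rw [invStereo_re, one_sub_stereo_apply_two, stereo_apply_zero]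
    field_simp
  · rw [invStereo_im, one_sub_stereo_apply_two, stereo_apply_one]
    field_simp

lemma continuousOn_invStereo : ContinuousOn invStereo {p | p 2 ≠ 1} := by
  have hden : ∀ p ∈ {p : EuclideanSpace ℝ (Fin 3) | p 2 ≠ 1}, 1 - p 2 ≠ 0 :=
    fun p hp ↦ sub_ne_zero.mpr (Ne.symm hp)
  exact Complex.equivRealProdCLM.symm.continuous.comp_continuousOn
    ((ContinuousOn.div (by fun_prop) (by fun_prop) hden).prodMk
      (ContinuousOn.div (by fun_prop) (by fun_prop) hden))

lemma eq_northPole_of_mem_sphereS {p : EuclideanSpace ℝ (Fin 3)} (hp : p ∈ sphereS)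
    (h2 : p 2 = 1) : p = northPole := by
  have hs : p 0 ^ 2 + p 1 ^ 2 + (p 2 - 1 / 2) ^ 2 = 1 / 4 := hp
  have h0 : p 0 = 0 := by nlinarith [sq_nonneg (p 0), sq_nonneg (p 1)]
  have h1 : p 1 = 0 := by nlinarith [sq_nonneg (p 0), sq_nonneg (p 1)]
  ext i
  fin_cases i <;> assumption

lemma stereo_invStereo {p : EuclideanSpace ℝ (Fin 3)} (hp : p ∈ sphereS) (h2 : p 2 ≠ 1) :
    stereo (invStereo p) = p := by
  have hd : 1 - p 2 ≠ 0 := sub_ne_zero.mpr (Ne.symm h2)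
  have hs : p 0 ^ 2 + p 1 ^ 2 + (p 2 - 1 / 2) ^ 2 = 1 / 4 := hp
  have hnorm : ‖invStereo p‖ ^ 2 = p 2 / (1 - p 2) := by
    rw [Complex.sq_norm, Complex.normSq_apply, invStereo_re, invStereo_im]
    field_simp
    nlinarith
  ext i
  fin_cases i
  · change stereo (invStereo p) 0 = p 0
    rw [stereo_apply_zero, hnorm, invStereo_re]
    field_simp
    ring
  · change stereo (invStereo p) 1 = p 1
    rw [stereo_apply_one, hnorm, invStereo_im]
    field_simp
    ring
  · change stereo (invStereo p) 2 = p 2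
    rw [stereo_apply_two, hnorm]
    field_simp
    ring

lemma range_stereo : range stereo = sphereS \ {northPole} := by
  refine Subset.antisymm ?_ fun p ⟨hp, hN⟩ ↦ ?_
  · rintro _ ⟨x, rfl⟩
    exact ⟨stereo_mem_sphereS x, fun h ↦ stereo_apply_two_ne_one x (by rw [h]; rfl)⟩
  · exact ⟨invStereo p, stereo_invStereo hp fun h2 ↦ hN (eq_northPole_of_mem_sphereS hp h2)⟩

lemma isEmbedding_stereo : IsEmbedding stereo :=
  .of_leftInverse_continuousOn_range continuous_stereo
    (continuousOn_invStereo.mono (range_subset_iff.mpr stereo_apply_two_ne_one))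
    leftInverse_invStereo_stereo

lemma isClosed_sphereS : IsClosed sphereS :=
  isClosed_eq (by fun_prop) continuous_const

lemma measurableSet_range_stereo : MeasurableSet (range stereo) := by
  rw [range_stereo]
  exact isClosed_sphereS.measurableSet.diff (measurableSet_singleton _)

lemma measure_compl_range_stereo_eq_zero_iff (σ : Measure (EuclideanSpace ℝ (Fin 3))) :
    σ (range stereo)ᶜ = 0 ↔ σ sphereSᶜ = 0 ∧ σ {northPole} = 0 := by
  rw [range_stereo, compl_sdiff, measure_union_null_iff, and_comm]

/-- The pushforward by the inverse stereographic projection `T` is a homeomorphism from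
`M₁(ℂ)` (with the weak topology) onto the set of probability measures on the sphere `S`
giving no mass to the north pole `(0,0,1)` (with the weak topology). -/
theorem pushforward_stereo_homeomorph :
    ∃ H : ProbabilityMeasure ℂ ≃ₜ
        {σ : ProbabilityMeasure (EuclideanSpace ℝ (Fin 3)) //
          (σ : Measure (EuclideanSpace ℝ (Fin 3))) sphereSᶜ = 0 ∧
          (σ : Measure (EuclideanSpace ℝ (Fin 3))) {northPole} = 0},
      ∀ μ : ProbabilityMeasure ℂ,
        ((H μ : ProbabilityMeasure (EuclideanSpace ℝ (Fin 3)))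
            : Measure (EuclideanSpace ℝ (Fin 3)))
          = (μ : Measure ℂ).map stereo := by
  have hT := isEmbedding_stereo.measurableEmbedding measurableSet_range_stereo
  exact ⟨(isEmbedding_stereo.probabilityMeasureMapHomeomorph hT).trans
    ((Homeomorph.refl _).subtype fun σ ↦ measure_compl_range_stereo_eq_zero_iff σ), fun μ ↦ rfl⟩

end
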